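/- arXiv:1410.3147 — 5 statements merged into one kernel-verified Lean document; each statement's English description precedes it below -/
import Mathlib

section
/- If S is a collection of 0-1 matrices with ex(n, S) ≤ c·n for all n (for a constant c), and every matrix in S contains the 2 × 2 identity matrix or two ones in the same row, then ex_k(m, S) = Θ(m/k): explicitly, ⌊m/k⌋ − 1 ≤ ex_k(m, S) ≤ m·c/(k − c) for all k > c. -/
/-- `A` contains the 0-1 pattern `P`. -/
def Contains {a b m n : ℕ} (P : Matrix (Fin a) (Fin b) Bool)
    (A : Matrix (Fin m) (Fin n) Bool) : Prop :=
  ∃ (ri : Fin a → Fin m) (ci : Fin b → Fin n),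
    StrictMono ri ∧ StrictMono ci ∧
      ∀ i j, P i j = true → A (ri i) (ci j) = true

/-- A 0-1 pattern of arbitrary dimensions. -/
structure Pat where
  rows : ℕ
  cols : ℕ
  M : Matrix (Fin rows) (Fin cols) Bool

/-- `A` avoids every matrix in the collection `S`. -/
def AvoidsAll {m n : ℕ} (A : Matrix (Fin m) (Fin n) Bool) (S : Set Pat) : Prop :=
  ∀ P ∈ S, ¬ Contains P.M A

/-- Total number of ones in `A`. -/
def onesCount {m n : ℕ} (A : Matrix (Fin m) (Fin n) Bool) : ℕ :=
  (Finset.univ.filter fun p : Fin m × Fin n => A p.1 p.2 = true).card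

/-- Number of ones in column `j` of `A`. -/
def colOnes {m n : ℕ} (A : Matrix (Fin m) (Fin n) Bool) (j : Fin n) : ℕ :=
  (Finset.univ.filter fun i : Fin m => A i j = true).card

/-- `ex(n, S) = ex(n, n, S)`: maximum number of ones in an `n × n` matrix avoiding `S`. -/
noncomputable def exWeightSq (n : ℕ) (S : Set Pat) : ℕ :=
  sSup {w : ℕ | ∃ A : Matrix (Fin n) (Fin n) Bool, AvoidsAll A S ∧ onesCount A = w}

/-- `ex_k(m, S)` as a supremum in `ℕ∞`. -/
noncomputable def exColsS (k m : ℕ) (S : Set Pat) : ℕ∞ :=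
  sSup {x : ℕ∞ | ∃ n : ℕ, x = (n : ℕ∞) ∧ ∃ A : Matrix (Fin m) (Fin n) Bool,
    AvoidsAll A S ∧ ∀ j, k ≤ colOnes A j}

/-- The `2 × 2` identity pattern. -/
def I2 : Matrix (Fin 2) (Fin 2) Bool := !![true, false; false, true]

/-!
For the upper bound, a bound `c·n` on square matrices extends to `c·(m + n)` on `m × n` matrices
by cutting off a maximal square and recursing on the rest; a matrix with `n` columns of at least
`k` ones then has `k·n ≤ c·m + c·n` ones. For the lower bound, split the rows into `⌊m/k⌋` blocks
of `k` consecutive rows and fill block `t` in column `⌊m/k⌋ - 1 - t`: every row has at most one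
one, and the ones descend from right to left, so the matrix contains neither two ones in a row
nor the `2 × 2` identity.
-/

open Finset
open scoped Matrix

theorem Contains.trans {a b p q m n : ℕ} {P : Matrix (Fin a) (Fin b) Bool}
    {Q : Matrix (Fin p) (Fin q) Bool} {A : Matrix (Fin m) (Fin n) Bool}
    (hPQ : Contains P Q) (hQA : Contains Q A) : Contains P A := by
  obtain ⟨r, c, hr, hc, h⟩ := hPQ
  obtain ⟨r', c', hr', hc', h'⟩ := hQA
  exact ⟨r' ∘ r, c' ∘ c, hr'.comp hr, hc'.comp hc, fun i j hij => h' _ _ (h i j hij)⟩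

theorem Contains.of_submatrix {a b m n m' n' : ℕ} {P : Matrix (Fin a) (Fin b) Bool}
    {A : Matrix (Fin m) (Fin n) Bool} {f : Fin m' → Fin m} {g : Fin n' → Fin n}
    (hf : StrictMono f) (hg : StrictMono g) (h : Contains P (A.submatrix f g)) :
    Contains P A :=
  h.trans ⟨f, g, hf, hg, fun _ _ hij => hij⟩

theorem AvoidsAll.submatrix {m n m' n' : ℕ} {S : Set Pat} {A : Matrix (Fin m) (Fin n) Bool}
    {f : Fin m' → Fin m} {g : Fin n' → Fin n} (hA : AvoidsAll A S)
    (hf : StrictMono f) (hg : StrictMono g) : AvoidsAll (A.submatrix f g) S :=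
  fun P hP h => hA P hP (h.of_submatrix hf hg)

section OnesCount

variable {m n : ℕ}

theorem onesCount_eq_sum_colOnes (A : Matrix (Fin m) (Fin n) Bool) :
    onesCount A = ∑ j, colOnes A j := by
  simp only [onesCount, colOnes, card_filter]
  rw [← univ_product_univ, sum_product_right]

theorem onesCount_transpose (A : Matrix (Fin m) (Fin n) Bool) : onesCount Aᵀ = onesCount A :=
  card_equiv (Equiv.prodComm _ _) fun _ => by simp only [mem_filter, mem_univ, true_and]; rfl

theorem onesCount_append_cols {p q : ℕ} (A : Matrix (Fin m) (Fin (p + q)) Bool) :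
    onesCount A = onesCount (A.submatrix id (Fin.castAdd q)) +
      onesCount (A.submatrix id (Fin.natAdd p)) := by
  simp only [onesCount_eq_sum_colOnes, Fin.sum_univ_add]
  rfl

theorem onesCount_append_rows {p q : ℕ} (A : Matrix (Fin (p + q)) (Fin n) Bool) :
    onesCount A = onesCount (A.submatrix (Fin.castAdd q) id) +
      onesCount (A.submatrix (Fin.natAdd p) id) := by
  simpa only [onesCount_transpose, ← Matrix.transpose_submatrix] using onesCount_append_cols Aᵀ

theorem mul_le_onesCount {k : ℕ} (A : Matrix (Fin m) (Fin n) Bool)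
    (hA : ∀ j, k ≤ colOnes A j) : k * n ≤ onesCount A := by
  rw [onesCount_eq_sum_colOnes]
  simpa [mul_comm] using card_nsmul_le_sum univ (colOnes A) k fun j _ => hA j

end OnesCount

section UpperBound

variable {S : Set Pat} {c : ℕ}

theorem onesCount_le_exWeightSq {n : ℕ} {A : Matrix (Fin n) (Fin n) Bool}
    (hA : AvoidsAll A S) : onesCount A ≤ exWeightSq n S := by
  refine le_csSup ⟨n * n, ?_⟩ ⟨A, hA, rfl⟩
  rintro w ⟨B, -, rfl⟩
  simpa [onesCount] using card_filter_le (univ : Finset (Fin n × Fin n)) _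

theorem onesCount_le_of_exWeightSq_le (hlin : ∀ n, exWeightSq n S ≤ c * n) :
    ∀ {m n : ℕ} (A : Matrix (Fin m) (Fin n) Bool), AvoidsAll A S → onesCount A ≤ c * m + c * n
  | m, n, A, hA => by
    rcases le_total m n with hmn | hnm
    · obtain ⟨q, rfl⟩ := Nat.exists_eq_add_of_le hmn
      rcases Nat.eq_zero_or_pos m with rfl | hm
      · simp [onesCount]
      have hsq := onesCount_le_exWeightSq (hA.submatrix strictMono_id (Fin.strictMono_castAdd q))
      have hrest := onesCount_le_of_exWeightSq_le hlin _
        (hA.submatrix strictMono_id (Fin.strictMono_natAdd m))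
      rw [onesCount_append_cols]
      linarith [hlin m]
    · obtain ⟨q, rfl⟩ := Nat.exists_eq_add_of_le hnm
      rcases Nat.eq_zero_or_pos n with rfl | hn
      · simp [onesCount]
      have hsq := onesCount_le_exWeightSq (hA.submatrix (Fin.strictMono_castAdd q) strictMono_id)
      have hrest := onesCount_le_of_exWeightSq_le hlin _
        (hA.submatrix (Fin.strictMono_natAdd n) strictMono_id)
      rw [onesCount_append_rows]
      linarith [hlin n]
  termination_by m n => m + n

theorem mul_exColsS_le (hlin : ∀ n, exWeightSq n S ≤ c * n) (k m : ℕ) :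
    ((k - c : ℕ) : ℕ∞) * exColsS k m S ≤ ((m * c : ℕ) : ℕ∞) := by
  rw [exColsS, ENat.mul_sSup]
  refine iSup₂_le ?_
  rintro _ ⟨n, rfl, A, hA, hcol⟩
  have hones := (mul_le_onesCount A hcol).trans (onesCount_le_of_exWeightSq_le hlin A hA)
  have : (k - c) * n ≤ m * c := by
    rw [Nat.sub_mul, mul_comm m c]
    omega
  exact_mod_cast this

end UpperBound

section LowerBound

theorem le_exColsS {k m n : ℕ} {S : Set Pat} (A : Matrix (Fin m) (Fin n) Bool)
    (hA : AvoidsAll A S) (hcol : ∀ j, k ≤ colOnes A j) : (n : ℕ∞) ≤ exColsS k m S :=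
  le_sSup ⟨n, rfl, A, hA, hcol⟩

def blockAntiDiag (k m n : ℕ) : Matrix (Fin m) (Fin n) Bool :=
  fun i j => decide (i / k + j + 1 = n)

variable {k m n : ℕ}

theorem blockAntiDiag_eq_of_row {i : Fin m} {j j' : Fin n} (hj : blockAntiDiag k m n i j = true)
    (hj' : blockAntiDiag k m n i j' = true) : j = j' := by
  simp only [blockAntiDiag, decide_eq_true_eq] at hj hj'
  exact Fin.ext (by omega)

theorem not_contains_I2_blockAntiDiag : ¬ Contains I2 (blockAntiDiag k m n) := by
  rintro ⟨r, c, hr, hc, h⟩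
  have h00 := h 0 0 rfl
  have h11 := h 1 1 rfl
  simp only [blockAntiDiag, decide_eq_true_eq] at h00 h11
  have hrow : (r 0 : ℕ) / k ≤ r 1 / k := Nat.div_le_div_right (hr Fin.zero_lt_one).le
  have hcol : (c 0 : ℕ) < c 1 := hc Fin.zero_lt_one
  omega

theorem avoidsAll_blockAntiDiag {S : Set Pat} (hS : ∀ P ∈ S, Contains I2 P.M ∨
      ∃ (i : Fin P.rows) (j j' : Fin P.cols), j ≠ j' ∧ P.M i j = true ∧ P.M i j' = true) :
    AvoidsAll (blockAntiDiag k m n) S := by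
  intro P hP hcont
  rcases hS P hP with hI2 | ⟨i, j, j', hne, hj, hj'⟩
  · exact not_contains_I2_blockAntiDiag (hI2.trans hcont)
  · obtain ⟨r, c, -, hc, h⟩ := hcont
    exact hne (hc.injective (blockAntiDiag_eq_of_row (h i j hj) (h i j' hj')))

theorem le_colOnes_blockAntiDiag (hk : 0 < k) (hnk : n * k ≤ m) (j : Fin n) :
    k ≤ colOnes (blockAntiDiag k m n) j := by
  set t := n - 1 - j
  have hblock : t * k + k ≤ m := by
    calc t * k + k = (t + 1) * k := by ring
      _ ≤ n * k := Nat.mul_le_mul_right k (by omega)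
      _ ≤ m := hnk
  let row : Fin k → Fin m := fun x => ⟨t * k + x, by omega⟩
  have hrow : ∀ x, blockAntiDiag k m n (row x) j = true := by
    intro x
    have : (t * k + x) / k = t := by
      rw [add_comm, Nat.add_mul_div_right _ _ hk, Nat.div_eq_of_lt x.isLt, zero_add]
    simp only [blockAntiDiag, row, this, decide_eq_true_eq]
    omega
  simpa [colOnes] using card_le_card_of_injOn row (s := univ) (by simpa [Set.MapsTo] using hrow)
    fun x _ y _ hxy => Fin.ext (by simpa [row] using hxy)

end LowerBound

/-- If `ex(n, S) ≤ c·n` for all `n` and every matrix in `S` contains the `2 × 2`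
identity or two ones in a common row, then `ex_k(m, S) = Θ(m/k)`: explicitly,
`⌊m/k⌋ - 1 ≤ ex_k(m, S)` and `(k - c)·ex_k(m, S) ≤ m·c` for all `k > c`. -/
theorem stmt_6 (S : Set Pat) (c : ℕ)
    (hlin : ∀ n, exWeightSq n S ≤ c * n)
    (hS : ∀ P ∈ S, Contains I2 P.M ∨
      ∃ (i : Fin P.rows) (j j' : Fin P.cols), j ≠ j' ∧ P.M i j = true ∧ P.M i j' = true) :
    ∀ k, c < k → ∀ m,
      ((m / k - 1 : ℕ) : ℕ∞) ≤ exColsS k m S ∧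
        ((k - c : ℕ) : ℕ∞) * exColsS k m S ≤ ((m * c : ℕ) : ℕ∞) := by
  intro k hck m
  refine ⟨?_, mul_exColsS_le hlin k m⟩
  calc ((m / k - 1 : ℕ) : ℕ∞) ≤ ((m / k : ℕ) : ℕ∞) := by exact_mod_cast Nat.sub_le _ _
    _ ≤ exColsS k m S := le_exColsS (blockAntiDiag k m (m / k)) (avoidsAll_blockAntiDiag hS)
        (le_colOnes_blockAntiDiag (by omega) (Nat.div_mul_le_self m k))
end

section
/- For every fixed k ≥ r, ex_k(m, P_{r,2}) = Ω(m^r): there is a constant a = a_{r,k} such that for all m, ex_k(a·m, P_{r,2}) ≥ C(m, r). -/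
/-- `ex_k(m, P)` as a supremum in `ℕ∞`. -/
noncomputable def exCols {a b : ℕ} (k m : ℕ) (P : Matrix (Fin a) (Fin b) Bool) : ℕ∞ :=
  sSup {x : ℕ∞ | ∃ n : ℕ, x = (n : ℕ∞) ∧ ∃ A : Matrix (Fin m) (Fin n) Bool,
    ¬ Contains P A ∧ ∀ col, k ≤ colOnes A col}

/-- The `r × c` all-ones pattern `P_{r,c}`. -/
def allOnes (r c : ℕ) : Matrix (Fin r) (Fin c) Bool := fun _ _ => true

/-- For every fixed `k ≥ r ≥ 1`, `ex_k(m, P_{r,2}) = Ω(m^r)`: there is a constant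
`a = a_{r,k}` such that `ex_k(a·m, P_{r,2}) ≥ C(m, r)` for all `m`. -/
theorem stmt_9 (r k : ℕ) (hr : 1 ≤ r) (hk : r ≤ k) :
    ∃ a : ℕ, 0 < a ∧ ∀ m : ℕ,
      ((Nat.choose m r : ℕ) : ℕ∞) ≤ exCols k (a * m) (allOnes r 2) := by
  have hk1 : 1 ≤ k := hr.trans hk
  refine ⟨2 * k * k, by positivity, fun m => ?_⟩
  rcases Nat.eq_zero_or_pos m with hm | hm
  · subst hm
    rw [Nat.choose_eq_zero_of_lt hr]
    simp
  -- main construction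
  set N := max m k with hN
  obtain ⟨p, hp, hp1, hp2⟩ := Nat.exists_prime_lt_and_le_two_mul N (by positivity)
  haveI : Fact p.Prime := ⟨hp⟩
  set B := 2 * k * m with hB
  have hmp : m < p := lt_of_le_of_lt (le_max_left _ _) hp1
  have hkp : k < p := lt_of_le_of_lt (le_max_right _ _) hp1
  have hpB : p ≤ B := by
    calc p ≤ 2 * N := hp2
    _ ≤ 2 * (k * m) := by
        gcongr
        exact max_le (Nat.le_mul_of_pos_left m hk1) (Nat.le_mul_of_pos_right k hm)
    _ = B := by ring
  have hrows : 2 * k * k * m = k * B := by ring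
  set n := Nat.choose m r with hn
  -- column index equiv
  have hcard : Fintype.card {s : Finset (Fin m) // s.card = r} = n := by
    rw [Fintype.card_finset_len, Fintype.card_fin]
  let e : Fin n → {s : Finset (Fin m) // s.card = r} :=
    (Fintype.equivFinOfCardEq hcard).symm
  have he : Function.Injective e := (Fintype.equivFinOfCardEq hcard).symm.injective
  -- coefficients
  let c : {s : Finset (Fin m) // s.card = r} → Fin r → ZMod p :=
    fun S i => ((S.1.orderEmbOfFin S.2 i : Fin m) : ℕ)
  have hc : Function.Injective c := by
    intro S T h
    have hfun : S.1.orderEmbOfFin S.2 = (T.1.orderEmbOfFin T.2 : Fin r → Fin m) := by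
      funext i
      have := congrFun h i
      have h3 := congrArg ZMod.val this
      rw [ZMod.val_cast_of_lt (lt_trans (S.1.orderEmbOfFin S.2 i).isLt hmp),
        ZMod.val_cast_of_lt (lt_trans (T.1.orderEmbOfFin T.2 i).isLt hmp)] at h3
      exact Fin.val_injective h3
    have : (S.1 : Set (Fin m)) = (T.1 : Set (Fin m)) := by
      rw [← Finset.range_orderEmbOfFin S.1 S.2, ← Finset.range_orderEmbOfFin T.1 T.2, hfun]
    exact Subtype.ext (Finset.coe_injective this)
  -- evaluation
  let pev : (Fin r → ZMod p) → ZMod p → ZMod p := fun v x => ∑ i : Fin r, v i * x ^ (i : ℕ)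
  -- rows
  have hrow_lt : ∀ (j : Fin k) (x : ZMod p), (j : ℕ) * B + x.val < 2 * k * k * m := by
    intro j x
    rw [hrows]
    calc (j : ℕ) * B + x.val < (j : ℕ) * B + B :=
          Nat.add_lt_add_left (lt_of_lt_of_le (ZMod.val_lt x) hpB) _
    _ = ((j : ℕ) + 1) * B := by ring
    _ ≤ k * B := Nat.mul_le_mul_right _ j.isLt
  let rowOf : Fin n → Fin k → Fin (2 * k * k * m) := fun col j =>
    ⟨(j : ℕ) * B + (pev (c (e col)) ((j : ℕ) : ZMod p)).val, hrow_lt j _⟩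
  have hBpos : 0 < B := lt_of_lt_of_le hp.pos hpB
  have hdiv : ∀ (jn v : ℕ), v < B → (jn * B + v) / B = jn := by
    intro jn v hv
    rw [Nat.add_comm, Nat.add_mul_div_right _ _ hBpos, Nat.div_eq_of_lt hv, Nat.zero_add]
  have hrow_inj : ∀ col, Function.Injective (rowOf col) := by
    intro col j j' h
    have h' : (j : ℕ) * B + (pev (c (e col)) ((j : ℕ) : ZMod p)).val =
        (j' : ℕ) * B + (pev (c (e col)) ((j' : ℕ) : ZMod p)).val := congrArg Fin.val h
    have hj : (j : ℕ) = (j' : ℕ) := by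
      have := congrArg (· / B) h'
      simpa [hdiv _ _ (lt_of_lt_of_le (ZMod.val_lt _) hpB)] using this
    exact Fin.val_injective hj
  -- helper: decompose a row equation
  have hdecomp : ∀ (j j' : Fin k) (x y : ZMod p),
      (j : ℕ) * B + x.val = (j' : ℕ) * B + y.val → j = j' ∧ x = y := by
    intro j j' x y h
    have hxB : x.val < B := lt_of_lt_of_le (ZMod.val_lt x) hpB
    have hyB : y.val < B := lt_of_lt_of_le (ZMod.val_lt y) hpB
    have hj : (j : ℕ) = (j' : ℕ) := by
      have := congrArg (· / B) h
      simpa [hdiv _ _ hxB, hdiv _ _ hyB] using this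
    refine ⟨Fin.val_injective hj, ?_⟩
    rw [hj] at h
    exact ZMod.val_injective p (Nat.add_left_cancel h)
  let A : Matrix (Fin (2 * k * k * m)) (Fin n) Bool := fun i col =>
    decide (∃ j : Fin k, i = rowOf col j)
  have hA : ∀ i col, A i col = true ↔ ∃ j : Fin k, i = rowOf col j := by
    intro i col; simp [A]
  -- column counts
  have hcols : ∀ col, k ≤ colOnes A col := by
    intro col
    have : (Finset.univ.filter fun i => A i col = true) = Finset.univ.image (rowOf col) := by
      ext i
      simp only [Finset.mem_filter, Finset.mem_univ, true_and, Finset.mem_image, hA]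
      exact ⟨fun ⟨j, h⟩ => ⟨j, h.symm⟩, fun ⟨j, h⟩ => ⟨j, h.symm⟩⟩
    rw [colOnes, this, Finset.card_image_of_injective _ (hrow_inj col), Finset.card_univ,
      Fintype.card_fin]
  -- non-containment
  have hnc : ¬ Contains (allOnes r 2) A := by
    rintro ⟨ri, ci, hri, hci, hall⟩
    have hSne : e (ci 0) ≠ e (ci 1) := fun h => absurd (he h)
      (Fin.ne_of_lt (hci (by norm_num : (0 : Fin 2) < 1)))
    -- for each t, an agreement point
    have key : ∀ t : Fin r, ∃ j : Fin k, ri t = rowOf (ci 0) j ∧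
        pev (c (e (ci 0))) ((j : ℕ) : ZMod p) = pev (c (e (ci 1))) ((j : ℕ) : ZMod p) := by
      intro t
      obtain ⟨j0, hj0⟩ := (hA _ _).mp (hall t 0 rfl)
      obtain ⟨j1, hj1⟩ := (hA _ _).mp (hall t 1 rfl)
      have : (j0 : ℕ) * B + (pev (c (e (ci 0))) ((j0 : ℕ) : ZMod p)).val =
          (j1 : ℕ) * B + (pev (c (e (ci 1))) ((j1 : ℕ) : ZMod p)).val := by
        have := hj0.symm.trans hj1
        exact congrArg Fin.val this
      obtain ⟨hjj, hval⟩ := hdecomp _ _ _ _ this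
      subst hjj
      exact ⟨j0, hj0, hval⟩
    choose J hJ1 hJ2 using key
    have hJinj : Function.Injective J := by
      intro t t' h
      have : ri t = ri t' := by rw [hJ1 t, hJ1 t', h]
      exact hri.injective this
    -- cast to ZMod p injectively
    have hxinj : Function.Injective (fun t : Fin r => (((J t : ℕ) : ZMod p))) := by
      intro t t' h
      apply hJinj
      apply Fin.val_injective
      have h' : ((J t : ℕ) : ZMod p) = ((J t' : ℕ) : ZMod p) := h
      have h3 := congrArg ZMod.val h'
      rwa [ZMod.val_cast_of_lt (lt_trans (J t).isLt hkp),
        ZMod.val_cast_of_lt (lt_trans (J t').isLt hkp)] at h3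
    have hzero : (fun i => c (e (ci 0)) i - c (e (ci 1)) i) = 0 := by
      apply Matrix.eq_zero_of_forall_index_sum_mul_pow_eq_zero hxinj
      intro t
      have := hJ2 t
      simp only [pev] at this
      simp only [sub_mul, Finset.sum_sub_distrib, this, sub_self]
    apply hSne
    apply hc
    funext i
    have := congrFun hzero i
    simpa [sub_eq_zero] using this
  -- conclude
  apply le_sSup
  exact ⟨n, rfl, A, hnc, hcols⟩
end

section
/- Every bar s-visibility hypergraph on n vertices (bars) has at most (2s+3)·n edges. -/
/-- A configuration of `n` pairwise disjoint horizontal bars in the plane, all of whose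
`2n` endpoint x-coordinates are distinct.  Bar `i` is the segment
`[l i, r i] × {y i}`. -/
structure BarConfig (n : ℕ) where
  l : Fin n → ℝ
  r : Fin n → ℝ
  y : Fin n → ℝ
  finite : ∀ i, l i < r i
  disjoint : ∀ i j, i ≠ j → y i = y j → r i < l j ∨ r j < l i
  distinctEnds : ∀ i j, (l i = l j → i = j) ∧ (r i = r j → i = j) ∧ l i ≠ r j

/-- The vertical segment `{x} × [yLo, yHi]` meets bar `i`. -/
def MeetsBar {n : ℕ} (B : BarConfig n) (x yLo yHi : ℝ) (i : Fin n) : Prop :=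
  B.l i ≤ x ∧ x ≤ B.r i ∧ yLo ≤ B.y i ∧ B.y i ≤ yHi

/-- `E` is an edge of the bar `s`-visibility hypergraph of `B`: a set of `s + 2` bars
such that some vertical segment intersects exactly the bars in `E` and no others. -/
def IsEdge {n : ℕ} (s : ℕ) (B : BarConfig n) (E : Finset (Fin n)) : Prop :=
  E.card = s + 2 ∧ ∃ x yLo yHi : ℝ, ∀ i : Fin n, i ∈ E ↔ MeetsBar B x yLo yHi i

namespace Bar12

variable {n : ℕ}

/-- `E` is realizable at abscissa `x`: all bars of `E` are alive at `x`, and `E` is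
`y`-convex among the bars alive at `x`. -/
def Rl (B : BarConfig n) (x : ℝ) (E : Finset (Fin n)) : Prop :=
  (∀ i ∈ E, B.l i ≤ x ∧ x ≤ B.r i) ∧
  ∀ j, B.l j ≤ x → x ≤ B.r j → (∃ i ∈ E, B.y i ≤ B.y j) → (∃ i ∈ E, B.y j ≤ B.y i) → j ∈ E

lemma isEdge_iff (s : ℕ) (B : BarConfig n) (E : Finset (Fin n)) :
    IsEdge s B E ↔ E.card = s + 2 ∧ ∃ x, Rl B x E := by
  constructor
  · rintro ⟨hc, x, yLo, yHi, h⟩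
    refine ⟨hc, x, ?_, ?_⟩
    · intro i hi; have := (h i).1 hi; exact ⟨this.1, this.2.1⟩
    · rintro j hj1 hj2 ⟨a, ha, hay⟩ ⟨b, hb, hby⟩
      have hA := (h a).1 ha; have hB := (h b).1 hb
      exact (h j).2 ⟨hj1, hj2, le_trans hA.2.2.1 hay, le_trans hby hB.2.2.2⟩
  · rintro ⟨hc, x, h1, h2⟩
    have hne : E.Nonempty := Finset.card_pos.mp (by omega)
    obtain ⟨a, ha, hmin⟩ := Finset.exists_min_image E B.y hne
    obtain ⟨b, hb, hmax⟩ := Finset.exists_max_image E B.y hne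
    refine ⟨hc, x, B.y a, B.y b, fun i =>
      ⟨fun hi => ⟨(h1 i hi).1, (h1 i hi).2, hmin i hi, hmax i hi⟩, ?_⟩⟩
    rintro ⟨m1, m2, m3, m4⟩
    exact h2 i m1 m2 ⟨a, ha, m3⟩ ⟨b, hb, m4⟩

lemma y_inj (B : BarConfig n) {x : ℝ} {a b : Fin n}
    (ha1 : B.l a ≤ x) (ha2 : x ≤ B.r a) (hb1 : B.l b ≤ x) (hb2 : x ≤ B.r b)
    (h : B.y a = B.y b) : a = b := by
  by_contra hne
  rcases B.disjoint a b hne h with h' | h' <;> linarith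

/-- The set of all endpoint x-coordinates. -/
noncomputable def EP (B : BarConfig n) : Finset ℝ :=
  Finset.image B.l Finset.univ ∪ Finset.image B.r Finset.univ

lemma l_mem_EP (B : BarConfig n) (i : Fin n) : B.l i ∈ EP B :=
  Finset.mem_union_left _ (Finset.mem_image_of_mem _ (Finset.mem_univ _))

lemma r_mem_EP (B : BarConfig n) (i : Fin n) : B.r i ∈ EP B :=
  Finset.mem_union_right _ (Finset.mem_image_of_mem _ (Finset.mem_univ _))

/-- The distance to the next endpoint strictly to the right of `x0` (or `1`). -/
noncomputable def nextGap (B : BarConfig n) (x0 : ℝ) : ℝ :=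
  if h : ((EP B).filter (fun c => x0 < c)).Nonempty then
    ((EP B).filter (fun c => x0 < c)).min' h - x0 else 1

lemma nextGap_pos (B : BarConfig n) (x0 : ℝ) : 0 < nextGap B x0 := by
  unfold nextGap
  split_ifs with h
  · have := Finset.mem_filter.mp (Finset.min'_mem _ h)
    linarith [this.2]
  · norm_num

lemma nextGap_prop (B : BarConfig n) (x0 : ℝ) :
    ∀ c ∈ EP B, c ≤ x0 ∨ x0 + nextGap B x0 ≤ c := by
  intro c hc
  by_cases h : c ≤ x0
  · exact Or.inl h
  · right
    have hmem : c ∈ (EP B).filter (fun c => x0 < c) :=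
      Finset.mem_filter.mpr ⟨hc, lt_of_not_ge h⟩
    have hne : ((EP B).filter (fun c => x0 < c)).Nonempty := ⟨c, hmem⟩
    rw [nextGap, dif_pos hne]
    linarith [Finset.min'_le _ c hmem]

lemma rl_congr (B : BarConfig n) {x0 x x' : ℝ} {E : Finset (Fin n)}
    (hx : x ∈ Set.Ioo x0 (x0 + nextGap B x0)) (hx' : x' ∈ Set.Ioo x0 (x0 + nextGap B x0))
    (h : Rl B x E) : Rl B x' E := by
  obtain ⟨hx1, hx2⟩ := hx; obtain ⟨hx'1, hx'2⟩ := hx'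
  have key : ∀ c ∈ EP B, (c ≤ x ↔ c ≤ x') ∧ (x ≤ c ↔ x' ≤ c) := by
    intro c hc
    rcases nextGap_prop B x0 c hc with h1 | h1 <;>
      exact ⟨⟨fun _ => by linarith, fun _ => by linarith⟩,
        ⟨fun _ => by linarith, fun _ => by linarith⟩⟩
  constructor
  · intro i hi
    exact ⟨(key _ (l_mem_EP B i)).1.mp (h.1 i hi).1, (key _ (r_mem_EP B i)).2.mp (h.1 i hi).2⟩
  · intro j hj1 hj2 hlo hhi
    exact h.2 j ((key _ (l_mem_EP B j)).1.mpr hj1) ((key _ (r_mem_EP B j)).2.mpr hj2) hlo hhi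

lemma bddBelow_wit (B : BarConfig n) {E : Finset (Fin n)} (hne : E.Nonempty) :
    BddBelow {x | Rl B x E} := by
  obtain ⟨i0, hi0⟩ := hne
  exact ⟨B.l i0, fun x hx => (hx.1 i0 hi0).1⟩

/-- Case A: if the infimum abscissa is itself a witness, it is the left endpoint of a
bar of `E`. -/
lemma exists_left (B : BarConfig n) {E : Finset (Fin n)} (hne : E.Nonempty)
    (hA : Rl B (sInf {x | Rl B x E}) E) :
    ∃ i ∈ E, B.l i = sInf {x | Rl B x E} := by
  by_contra hcon
  push_neg at hcon
  set x0 := sInf {x | Rl B x E} with hx0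
  have hlt : ∀ i ∈ E, B.l i < x0 := fun i hi =>
    lt_of_le_of_ne ((hA.1 i hi).1) (hcon i hi)
  set P' := (EP B).filter (fun c => c < x0) with hP'
  have hP'ne : P'.Nonempty := by
    obtain ⟨i0, hi0⟩ := hne
    exact ⟨B.l i0, Finset.mem_filter.mpr ⟨l_mem_EP B i0, hlt i0 hi0⟩⟩
  set m := P'.max' hP'ne with hm
  have hm_lt : m < x0 := (Finset.mem_filter.mp (P'.max'_mem hP'ne)).2
  have hmax : ∀ c ∈ EP B, c < x0 → c ≤ m := fun c h1 h2 =>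
    P'.le_max' c (Finset.mem_filter.mpr ⟨h1, h2⟩)
  set x' := (m + x0) / 2 with hx'
  have hx'1 : m < x' := by rw [hx']; linarith
  have hx'2 : x' < x0 := by rw [hx']; linarith
  have hRl : Rl B x' E := by
    constructor
    · intro i hi
      have h1 : B.l i ≤ m := hmax _ (l_mem_EP B i) (hlt i hi)
      exact ⟨by linarith, by linarith [(hA.1 i hi).2]⟩
    · intro j hj1 hj2 hlo hhi
      have hrj : x0 ≤ B.r j := by
        by_contra hc
        have := hmax (B.r j) (r_mem_EP B j) (lt_of_not_ge hc)
        linarith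
      exact hA.2 j (by linarith) hrj hlo hhi
  have := csInf_le (bddBelow_wit B hne) hRl
  linarith

/-- Case B: if the infimum abscissa is not a witness, then it is the right endpoint of a
bar not in `E` whose `y`-coordinate lies strictly inside the `y`-range of `E`; moreover
`E` is realizable throughout the gap immediately to the right. -/
lemma exists_right (B : BarConfig n) {E : Finset (Fin n)} (hne : E.Nonempty)
    (hwit : ∃ x, Rl B x E) (hB : ¬ Rl B (sInf {x | Rl B x E}) E) :
    ∃ j, j ∉ E ∧ (∃ i ∈ E, B.y i < B.y j) ∧ (∃ i ∈ E, B.y j < B.y i) ∧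
      ∀ x ∈ Set.Ioo (B.r j) (B.r j + nextGap B (B.r j)),
        Rl B x E ∧ ∀ m, B.l m ≤ x → x ≤ B.r m → B.y m ≠ B.y j := by
  set x0 := sInf {x | Rl B x E} with hx0
  have hbdd := bddBelow_wit B hne
  have hδ := nextGap_pos B x0
  set δ := nextGap B x0 with hδdef
  -- a witness in (x0, x0 + δ)
  obtain ⟨xw, hxwR, hxwlt⟩ : ∃ xw ∈ {x | Rl B x E}, xw < x0 + δ := by
    by_contra hc
    push_neg at hc
    have : x0 + δ ≤ x0 := le_csInf hwit hc
    linarith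
  have hxwgt : x0 < xw := lt_of_le_of_ne (csInf_le hbdd hxwR)
    (fun h => hB (h ▸ hxwR))
  have hxwIoo : xw ∈ Set.Ioo x0 (x0 + δ) := ⟨hxwgt, hxwlt⟩
  have hall : ∀ x ∈ Set.Ioo x0 (x0 + δ), Rl B x E :=
    fun x hx => rl_congr B hxwIoo hx hxwR
  -- all bars of E are alive at x0
  have hEalive : ∀ i ∈ E, B.l i ≤ x0 ∧ x0 ≤ B.r i := by
    intro i hi
    have h1 := (hxwR.1 i hi).1
    have h2 := (hxwR.1 i hi).2
    rcases nextGap_prop B x0 (B.l i) (l_mem_EP B i) with h | h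
    · exact ⟨h, by linarith⟩
    · linarith
  -- convexity fails at x0
  have hfail : ¬ (∀ j, B.l j ≤ x0 → x0 ≤ B.r j →
      (∃ i ∈ E, B.y i ≤ B.y j) → (∃ i ∈ E, B.y j ≤ B.y i) → j ∈ E) := by
    intro h
    exact hB ⟨hEalive, h⟩
  push_neg at hfail
  obtain ⟨j, hj1, hj2, hjlo, hjhi, hjE⟩ := hfail
  -- strictness of betweenness
  obtain ⟨a, haE, hay⟩ := hjlo
  obtain ⟨b, hbE, hby⟩ := hjhi
  have hane : B.y a ≠ B.y j := fun h =>
    hjE (y_inj B (hEalive a haE).1 (hEalive a haE).2 hj1 hj2 h ▸ haE)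
  have hbne : B.y j ≠ B.y b := fun h =>
    hjE ((y_inj B (hEalive b hbE).1 (hEalive b hbE).2 hj1 hj2 h.symm) ▸ hbE)
  -- r j = x0
  have hrj : B.r j = x0 := by
    rcases nextGap_prop B x0 (B.r j) (r_mem_EP B j) with h | h
    · exact le_antisymm h hj2
    · exfalso
      have : j ∈ E := hxwR.2 j (by linarith) (by linarith)
        ⟨a, haE, hay⟩ ⟨b, hbE, hby⟩
      exact hjE this
  refine ⟨j, hjE, ⟨a, haE, lt_of_le_of_ne hay hane⟩, ⟨b, hbE, lt_of_le_of_ne hby hbne⟩, ?_⟩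
  intro x hx
  rw [hrj] at hx
  refine ⟨hall x hx, ?_⟩
  intro m hm1 hm2 hym
  have hmj : m ≠ j := by
    intro h
    rw [h] at hm2
    rw [hrj] at hm2
    linarith [hx.1]
  rcases B.disjoint m j hmj hym with h' | h'
  · linarith [hx.1, hrj.ge]
  · rcases nextGap_prop B x0 (B.l m) (l_mem_EP B m) with h'' | h''
    · rw [hrj] at h'; linarith
    · linarith [hx.2]

lemma chain {α : Type*} (f : α → ℝ) {T A A' : Finset α}
    (hA : A ⊆ T) (hA' : A' ⊆ T)
    (up : ∀ a ∈ A, ∀ t ∈ T, f a ≤ f t → t ∈ A)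
    (up' : ∀ a ∈ A', ∀ t ∈ T, f a ≤ f t → t ∈ A')
    (hc : A.card = A'.card) : A = A' := by
  by_cases h : A ⊆ A'
  · exact Finset.eq_of_subset_of_card_le h hc.ge
  · obtain ⟨a, ha, ha'⟩ := Finset.not_subset.mp h
    have hsub : A' ⊆ A := by
      intro b hb
      have hfb : ¬ f b ≤ f a := fun hle => ha' (up' b hb a (hA ha) hle)
      exact up a ha b (hA' hb) (le_of_lt (lt_of_not_ge hfb))
    exact (Finset.eq_of_subset_of_card_le hsub hc.le).symm

/-- Two edges realizable at the same abscissa, with the same number of bars below a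
common pivot height `Y`, with elements on both sides of `Y`, coincide. -/
lemma uniq (B : BarConfig n) {x : ℝ} {E E' : Finset (Fin n)}
    (hE : Rl B x E) (hE' : Rl B x E') (Y : ℝ)
    (hupE : ∃ i ∈ E, Y ≤ B.y i) (hupE' : ∃ i ∈ E', Y ≤ B.y i)
    (hloE : ∃ i ∈ E, B.y i ≤ Y) (hloE' : ∃ i ∈ E', B.y i ≤ Y)
    (hcard : E.card = E'.card)
    (hk : (E.filter fun m => B.y m < Y).card = (E'.filter fun m => B.y m < Y).card) :
    E = E' := by
  classical
  set T : Finset (Fin n) := Finset.univ.filter (fun t => B.l t ≤ x ∧ x ≤ B.r t) with hT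
  have hTE : E ⊆ T := fun i hi => Finset.mem_filter.mpr ⟨Finset.mem_univ _, hE.1 i hi⟩
  have hTE' : E' ⊆ T := fun i hi => Finset.mem_filter.mpr ⟨Finset.mem_univ _, hE'.1 i hi⟩
  have memT : ∀ t ∈ T, B.l t ≤ x ∧ x ≤ B.r t := fun t ht => (Finset.mem_filter.mp ht).2
  -- below the pivot
  have hloset : E.filter (fun m => B.y m < Y) = E'.filter (fun m => B.y m < Y) := by
    refine chain B.y (T := T.filter (fun t => B.y t < Y))
      (Finset.filter_subset_filter _ hTE) (Finset.filter_subset_filter _ hTE') ?_ ?_ hk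
    · intro a ha t ht hle
      obtain ⟨haE, _⟩ := Finset.mem_filter.mp ha
      obtain ⟨htT, hty⟩ := Finset.mem_filter.mp ht
      obtain ⟨w, hw, hwY⟩ := hupE
      exact Finset.mem_filter.mpr
        ⟨hE.2 t (memT t htT).1 (memT t htT).2 ⟨a, haE, hle⟩ ⟨w, hw, by linarith⟩, hty⟩
    · intro a ha t ht hle
      obtain ⟨haE, _⟩ := Finset.mem_filter.mp ha
      obtain ⟨htT, hty⟩ := Finset.mem_filter.mp ht
      obtain ⟨w, hw, hwY⟩ := hupE'
      exact Finset.mem_filter.mpr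
        ⟨hE'.2 t (memT t htT).1 (memT t htT).2 ⟨a, haE, hle⟩ ⟨w, hw, by linarith⟩, hty⟩
  -- at the pivot
  have heqset : E.filter (fun m => B.y m = Y) = E'.filter (fun m => B.y m = Y) := by
    ext m
    simp only [Finset.mem_filter]
    constructor
    · rintro ⟨hm, hy⟩
      obtain ⟨w, hw, hwY⟩ := hupE'
      obtain ⟨w', hw', hw'Y⟩ := hloE'
      exact ⟨hE'.2 m (hE.1 m hm).1 (hE.1 m hm).2 ⟨w', hw', by linarith⟩
        ⟨w, hw, by linarith⟩, hy⟩
    · rintro ⟨hm, hy⟩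
      obtain ⟨w, hw, hwY⟩ := hupE
      obtain ⟨w', hw', hw'Y⟩ := hloE
      exact ⟨hE.2 m (hE'.1 m hm).1 (hE'.1 m hm).2 ⟨w', hw', by linarith⟩
        ⟨w, hw, by linarith⟩, hy⟩
  -- cardinality bookkeeping
  have hcards : ∀ (F : Finset (Fin n)),
      (F.filter fun m => B.y m < Y).card + (F.filter fun m => B.y m = Y).card +
        (F.filter fun m => Y < B.y m).card = F.card := by
    intro F
    have h2 : F.filter (fun m => ¬ B.y m < Y) =
        F.filter (fun m => B.y m = Y) ∪ F.filter (fun m => Y < B.y m) := by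
      ext m
      simp only [Finset.mem_filter, Finset.mem_union, not_lt]
      constructor
      · rintro ⟨hm, h⟩
        rcases eq_or_lt_of_le h with h | h
        · exact Or.inl ⟨hm, h.symm⟩
        · exact Or.inr ⟨hm, h⟩
      · rintro (⟨hm, h⟩ | ⟨hm, h⟩)
        · exact ⟨hm, le_of_eq h.symm⟩
        · exact ⟨hm, le_of_lt h⟩
    have hdisj : Disjoint (F.filter (fun m => B.y m = Y)) (F.filter (fun m => Y < B.y m)) := by
      rw [Finset.disjoint_left]
      intro m h1 h2
      have := (Finset.mem_filter.mp h1).2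
      have := (Finset.mem_filter.mp h2).2
      linarith
    have hsum := Finset.card_filter_add_card_filter_not
      (s := F) (p := fun m => B.y m < Y)
    rw [h2, Finset.card_union_of_disjoint hdisj] at hsum
    omega
  have hhicard : (E.filter fun m => Y < B.y m).card = (E'.filter fun m => Y < B.y m).card := by
    have h1 := hcards E
    have h2 := hcards E'
    rw [heqset, hk] at h1
    omega
  -- above the pivot
  have hhiset : E.filter (fun m => Y < B.y m) = E'.filter (fun m => Y < B.y m) := by
    refine chain (fun a => -B.y a) (T := T.filter (fun t => Y < B.y t))
      (Finset.filter_subset_filter _ hTE) (Finset.filter_subset_filter _ hTE') ?_ ?_ hhicard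
    · intro a ha t ht hle
      obtain ⟨haE, _⟩ := Finset.mem_filter.mp ha
      obtain ⟨htT, hty⟩ := Finset.mem_filter.mp ht
      obtain ⟨w, hw, hwY⟩ := hloE
      refine Finset.mem_filter.mpr
        ⟨hE.2 t (memT t htT).1 (memT t htT).2 ⟨w, hw, by linarith⟩
          ⟨a, haE, by simpa using hle⟩, hty⟩
    · intro a ha t ht hle
      obtain ⟨haE, _⟩ := Finset.mem_filter.mp ha
      obtain ⟨htT, hty⟩ := Finset.mem_filter.mp ht
      obtain ⟨w, hw, hwY⟩ := hloE'
      refine Finset.mem_filter.mpr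
        ⟨hE'.2 t (memT t htT).1 (memT t htT).2 ⟨w, hw, by linarith⟩
          ⟨a, haE, by simpa using hle⟩, hty⟩
  -- conclude
  refine Finset.eq_of_subset_of_card_le ?_ hcard.ge
  intro m hm
  rcases lt_trichotomy (B.y m) Y with h | h | h
  · exact Finset.filter_subset _ _ (hloset ▸ Finset.mem_filter.mpr ⟨hm, h⟩)
  · exact Finset.filter_subset _ _ (heqset ▸ Finset.mem_filter.mpr ⟨hm, h⟩)
  · exact Finset.filter_subset _ _ (hhiset ▸ Finset.mem_filter.mpr ⟨hm, h⟩)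

/-- Tag of type A: `E` is realizable at the left endpoint of its member `i`, and the
number of members of `E` strictly below `i` is `k`. -/
def GoodA (B : BarConfig n) (E : Finset (Fin n)) (i : Fin n) (k : ℕ) : Prop :=
  i ∈ E ∧ Rl B (B.l i) E ∧ (E.filter fun m => B.y m < B.y i).card = k

/-- Tag of type B: the bar `j` has height strictly inside the `y`-range of `E`, exactly
`k + 1` members of `E` lie below it, and `E` is realizable (with no bar at height `y j`
alive) throughout the gap to the right of `r j`. -/
def GoodB (B : BarConfig n) (E : Finset (Fin n)) (j : Fin n) (k : ℕ) : Prop :=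
  (∃ i ∈ E, B.y i < B.y j) ∧ (∃ i ∈ E, B.y j < B.y i) ∧
  (E.filter fun m => B.y m < B.y j).card = k + 1 ∧
  ∀ x ∈ Set.Ioo (B.r j) (B.r j + nextGap B (B.r j)),
    Rl B x E ∧ ∀ m, B.l m ≤ x → x ≤ B.r m → B.y m ≠ B.y j

lemma goodA_inj (B : BarConfig n) {E E' : Finset (Fin n)} {i : Fin n} {k : ℕ}
    (h : GoodA B E i k) (h' : GoodA B E' i k) (hc : E.card = E'.card) : E = E' := by
  obtain ⟨hi, hRl, hk⟩ := h
  obtain ⟨hi', hRl', hk'⟩ := h'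
  exact uniq B hRl hRl' (B.y i) ⟨i, hi, le_refl _⟩ ⟨i, hi', le_refl _⟩
    ⟨i, hi, le_refl _⟩ ⟨i, hi', le_refl _⟩ hc (hk.trans hk'.symm)

lemma goodB_inj (B : BarConfig n) {E E' : Finset (Fin n)} {j : Fin n} {k : ℕ}
    (h : GoodB B E j k) (h' : GoodB B E' j k) (hc : E.card = E'.card) : E = E' := by
  obtain ⟨hlo, hhi, hk, hIoo⟩ := h
  obtain ⟨hlo', hhi', hk', hIoo'⟩ := h'
  set x := B.r j + nextGap B (B.r j) / 2 with hx
  have hxIoo : x ∈ Set.Ioo (B.r j) (B.r j + nextGap B (B.r j)) := by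
    constructor <;> [skip; skip] <;>
      · rw [hx]; linarith [nextGap_pos B (B.r j)]
  obtain ⟨hRl, _⟩ := hIoo x hxIoo
  obtain ⟨hRl', _⟩ := hIoo' x hxIoo
  obtain ⟨a, haE, ha⟩ := hlo
  obtain ⟨b, hbE, hb⟩ := hhi
  obtain ⟨a', haE', ha'⟩ := hlo'
  obtain ⟨b', hbE', hb'⟩ := hhi'
  exact uniq B hRl hRl' (B.y j) ⟨b, hbE, le_of_lt hb⟩ ⟨b', hbE', le_of_lt hb'⟩
    ⟨a, haE, le_of_lt ha⟩ ⟨a', haE', le_of_lt ha'⟩ hc (hk.trans hk'.symm)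

end Bar12

open Bar12 in
/-- Every bar `s`-visibility hypergraph on `n` vertices has at most `(2s+3)·n` edges. -/
theorem stmt_12 (n s : ℕ) (B : BarConfig n) :
    {E : Finset (Fin n) | IsEdge s B E}.ncard ≤ (2 * s + 3) * n := by
  classical
  set S := {E : Finset (Fin n) | IsEdge s B E} with hS
  have hex : ∀ E : S, ∃ t : (Fin n × Fin (s + 2)) ⊕ (Fin n × Fin (s + 1)),
      (∃ i k, t = Sum.inl (i, k) ∧ GoodA B E.1 i k.1) ∨
      (∃ j k, t = Sum.inr (j, k) ∧ GoodB B E.1 j k.1) := by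
    rintro ⟨E, hE⟩
    obtain ⟨hc, hwit⟩ := (isEdge_iff s B E).mp hE
    have hne : E.Nonempty := Finset.card_pos.mp (by omega)
    by_cases hA : Rl B (sInf {x | Rl B x E}) E
    · obtain ⟨i, hi, hli⟩ := exists_left B hne hA
      have hk : (E.filter fun m => B.y m < B.y i).card ≤ s + 1 := by
        have hsub : (E.filter fun m => B.y m < B.y i) ⊆ E.erase i := by
          intro m hm
          obtain ⟨hm1, hm2⟩ := Finset.mem_filter.mp hm
          exact Finset.mem_erase.mpr ⟨fun h => absurd hm2 (by rw [h]; exact lt_irrefl _), hm1⟩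
        calc (E.filter fun m => B.y m < B.y i).card
            ≤ (E.erase i).card := Finset.card_le_card hsub
          _ = s + 1 := by rw [Finset.card_erase_of_mem hi, hc]; omega
        
      refine ⟨Sum.inl (i, ⟨(E.filter fun m => B.y m < B.y i).card, by omega⟩),
        Or.inl ⟨i, _, rfl, hi, ?_, rfl⟩⟩
      rw [hli]; exact hA
    · obtain ⟨j, hjE, hjlo, hjhi, hIoo⟩ := exists_right B hne hwit hA
      set k' := (E.filter fun m => B.y m < B.y j).card with hk'
      have hk1 : 1 ≤ k' := by
        obtain ⟨a, haE, ha⟩ := hjlo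
        have : a ∈ E.filter fun m => B.y m < B.y j := Finset.mem_filter.mpr ⟨haE, ha⟩
        have := Finset.card_pos.mpr ⟨a, this⟩
        omega
      have hk2 : k' ≤ s + 1 := by
        obtain ⟨b, hbE, hb⟩ := hjhi
        have hsub : (E.filter fun m => B.y m < B.y j) ⊆ E.erase b := by
          intro m hm
          obtain ⟨hm1, hm2⟩ := Finset.mem_filter.mp hm
          refine Finset.mem_erase.mpr ⟨fun h => ?_, hm1⟩
          rw [h] at hm2; linarith
        calc k' ≤ (E.erase b).card := Finset.card_le_card hsub
          _ = s + 1 := by rw [Finset.card_erase_of_mem hbE, hc]; omega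
        
      refine ⟨Sum.inr (j, ⟨k' - 1, by omega⟩),
        Or.inr ⟨j, ⟨k' - 1, by omega⟩, rfl, hjlo, hjhi, ?_, hIoo⟩⟩
      show (E.filter fun m => B.y m < B.y j).card = k' - 1 + 1
      omega
  choose f hf using hex
  have hcardS : ∀ E : S, (E.1).card = s + 2 := fun E => E.2.1
  have hinj : Function.Injective f := by
    rintro ⟨E, hE⟩ ⟨E', hE'⟩ heq
    have h1 := hf ⟨E, hE⟩
    have h2 := hf ⟨E', hE'⟩
    rw [heq] at h1
    have hcc : E.card = E'.card := by
      rw [hcardS ⟨E, hE⟩, hcardS ⟨E', hE'⟩]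
    apply Subtype.ext
    rcases h1 with ⟨i, k, ht, hG⟩ | ⟨j, k, ht, hG⟩ <;>
      rcases h2 with ⟨i', k', ht', hG'⟩ | ⟨j', k', ht', hG'⟩
    · rw [ht] at ht'
      simp only [Sum.inl.injEq, Prod.mk.injEq] at ht'
      obtain ⟨rfl, rfl⟩ := ht'
      exact goodA_inj B hG hG' hcc
    · rw [ht] at ht'; exact absurd ht' (by simp)
    · rw [ht] at ht'; exact absurd ht' (by simp)
    · rw [ht] at ht'
      simp only [Sum.inr.injEq, Prod.mk.injEq] at ht'
      obtain ⟨rfl, rfl⟩ := ht'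
      exact goodB_inj B hG hG' hcc
  have hfin : S.Finite := Set.toFinite _
  calc S.ncard = Nat.card S := (Nat.card_coe_set_eq S).symm
    _ ≤ Nat.card ((Fin n × Fin (s + 2)) ⊕ (Fin n × Fin (s + 1))) :=
        Nat.card_le_card_of_injective f hinj
    _ = (2 * s + 3) * n := by
        simp [Nat.card_eq_fintype_card]
        ring
end

section
/- Let M be an n × n 0-1 matrix avoiding every matrix in T_{r,s}, and let M' be obtained from M by deleting the first s+1 and last s+1 ones in every row and the last r ones in every column. Construct the bar s-visibility representation H from M' (one bar per nonempty row of M', spanning from its first to its last one) with a vertical edge-segment from each one of M' having at least s+1 ones of M' below it in its column, extending to the (s+1)-st bar below. Then every edge of H has multiplicity less than r (i.e., no (s+2)-set of bars is realized as an edge by r distinct columns). -/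
/-- Membership in the collection `T_{r,s}`. -/
def memT (r s : ℕ) (M : Matrix (Fin (r + s + 2)) (Fin (r + 2 * s + 2)) Bool) : Prop :=
  ∃ (f g : Fin (s + 1) ≃ Fin (s + 1)) (h : Fin r ≃ Fin r),
    ∀ i j, M i j = true ↔
      ((i.val = 0 ∧ ∃ a : Fin r, j.val = s + 1 + a.val) ∨
        (∃ a : Fin (s + 1), i.val = 1 + a.val ∧ j.val = (f a).val) ∨
        (∃ a : Fin (s + 1), i.val = 1 + a.val ∧ j.val = r + s + 1 + (g a).val) ∨
        (∃ a : Fin r, i.val = s + 2 + a.val ∧ j.val = s + 1 + (h a).val))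

/-- `M'`: the matrix obtained from `M` by deleting the first `s+1` and last `s+1` ones
in every row and the last `r` ones in every column.  A one of `M` survives iff it is
preceded by at least `s+1` ones in its row, followed by at least `s+1` ones in its row,
and followed by at least `r` ones (weakly) below... precisely: it is not among the first
`s+1` or last `s+1` ones of its row nor among the last `r` ones of its column. -/
def pruned (r s : ℕ) {n : ℕ} (M : Matrix (Fin n) (Fin n) Bool) :
    Matrix (Fin n) (Fin n) Bool :=
  fun i j =>
    M i j &&
      decide (s + 1 < (Finset.univ.filter fun j' : Fin n => j' ≤ j ∧ M i j' = true).card) &&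
      decide (s + 1 < (Finset.univ.filter fun j' : Fin n => j ≤ j' ∧ M i j' = true).card) &&
      decide (r < (Finset.univ.filter fun i' : Fin n => i ≤ i' ∧ M i' j = true).card)

/-- The bar of row `i` of `M'` (spanning from its first one to its last one) crosses
column `c`. -/
def Spans {n : ℕ} (M' : Matrix (Fin n) (Fin n) Bool) (i c : Fin n) : Prop :=
  (∃ j1, j1 ≤ c ∧ M' i j1 = true) ∧ (∃ j2, c ≤ j2 ∧ M' i j2 = true)

/-- Column `c` realizes the `(s+2)`-set of bars `E` as an edge of the bar `s`-visibility
representation built from `M'`: there is a one of `M'` at `(i, c)` with at least `s+1`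
ones of `M'` below it in column `c`, and `E` consists of `i` together with the bars
crossing column `c` strictly below `i` up to the `(s+1)`-st such bar `i'`. -/
def Realizes (s : ℕ) {n : ℕ} (M' : Matrix (Fin n) (Fin n) Bool) (c : Fin n)
    (E : Finset (Fin n)) : Prop :=
  E.card = s + 2 ∧
    ∃ i ∈ E, M' i c = true ∧
      s + 1 ≤ (Finset.univ.filter fun i'' : Fin n => i < i'' ∧ M' i'' c = true).card ∧
      ∃ i' ∈ E, (∀ a ∈ E, i ≤ a ∧ a ≤ i') ∧
        ∀ a : Fin n, a ∈ E ↔ (a = i ∨ (i < a ∧ a ≤ i' ∧ Spans M' a c))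


open Finset

namespace Fin

variable {α : Type*} {k l : ℕ}

theorem strictMono_append [Preorder α] {u : Fin k → α} {v : Fin l → α}
    (hu : StrictMono u) (hv : StrictMono v) (huv : ∀ i j, u i < v j) :
    StrictMono (append u v) := by
  intro i j hij
  induction i using addCases with
  | left i =>
    induction j using addCases with
    | left j => simpa using hu ((strictMono_castAdd l).lt_iff_lt.1 hij)
    | right j => simpa using huv i j
  | right i =>
    induction j using addCases with
    | left j => exact absurd hij (by simp [lt_def]; omega)
    | right j => simpa using hv ((strictMono_natAdd k).lt_iff_lt.1 hij)

theorem append_of_val_eq_left (u : Fin k → α) (v : Fin l → α) {i : Fin (k + l)} {t : Fin k}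
    (h : i.val = t.val) : append u v i = u t := by
  rw [show i = castAdd l t from Fin.ext h, append_left]

theorem append_of_val_eq_right (u : Fin k → α) (v : Fin l → α) {i : Fin (k + l)} {t : Fin l}
    (h : i.val = k + t.val) : append u v i = v t := by
  rw [show i = natAdd k t from Fin.ext h, append_right]

end Fin

theorem exists_strictMono_perm_mem_of_le_card {α : Type*} [LinearOrder α] {k : ℕ}
    (A : Fin k → Finset α) (hA : ∀ t, k ≤ #(A t)) :
    ∃ (L : Fin k → α) (σ : Equiv.Perm (Fin k)), StrictMono L ∧ ∀ t, L (σ t) ∈ A t := by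
  obtain ⟨φ, hφ, hφA⟩ : ∃ φ : Fin k → α, Function.Injective φ ∧ ∀ t, φ t ∈ A t := by
    refine (all_card_le_biUnion_card_iff_exists_injective A).1 fun S => ?_
    obtain rfl | ⟨t, ht⟩ := S.eq_empty_or_nonempty
    · simp
    · calc #S ≤ k := card_le_univ S |>.trans_eq (Fintype.card_fin k)
        _ ≤ #(A t) := hA t
        _ ≤ #(S.biUnion A) := card_le_card (subset_biUnion_of_mem A ht)
  refine ⟨φ ∘ Tuple.sort φ, (Tuple.sort φ).symm,
    (Tuple.monotone_sort φ).strictMono_of_injective (hφ.comp (Tuple.sort φ).injective),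
    fun t => by simpa using hφA t⟩

theorem exists_memT_contains_of_blocks {r s m n : ℕ} {A : Matrix (Fin m) (Fin n) Bool}
    {x : Fin m} {b : Fin (s + 1) → Fin m} {ρ : Fin r → Fin m}
    {L R : Fin (s + 1) → Fin n} {c : Fin r → Fin n}
    (hb : StrictMono b) (hρ : StrictMono ρ) (hL : StrictMono L) (hc : StrictMono c)
    (hR : StrictMono R) (hxb : ∀ a, x < b a) (hbρ : ∀ a a', b a < ρ a')
    (hLc : ∀ a k, L a < c k) (hcR : ∀ k a, c k < R a) (hLR : ∀ a a', L a < R a')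
    {f g : Equiv.Perm (Fin (s + 1))} {h : Equiv.Perm (Fin r)}
    (htop : ∀ k, A x (c k) = true) (hleft : ∀ a, A (b a) (L (f a)) = true)
    (hright : ∀ a, A (b a) (R (g a)) = true) (hbot : ∀ k, A (ρ (h k)) (c k) = true) :
    ∃ P, memT r s P ∧ Contains P A := by
  let P : Matrix (Fin (r + s + 2)) (Fin (r + 2 * s + 2)) Bool := fun i j =>
    decide ((i.val = 0 ∧ ∃ a : Fin r, j.val = s + 1 + a.val) ∨
      (∃ a : Fin (s + 1), i.val = 1 + a.val ∧ j.val = (f a).val) ∨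
      (∃ a : Fin (s + 1), i.val = 1 + a.val ∧ j.val = r + s + 1 + (g a).val) ∨
      (∃ a : Fin r, i.val = s + 2 + a.val ∧ j.val = s + 1 + (h.symm a).val))
  refine ⟨P, ⟨f, g, h.symm, fun i j => by simp [P]⟩, ?_⟩
  let rows := Fin.append (Fin.cons x b) ρ ∘ Fin.cast (by omega : r + s + 2 = s + 2 + r)
  let cols := Fin.append (Fin.append L c) R ∘
    Fin.cast (by omega : r + 2 * s + 2 = s + 1 + r + (s + 1))
  have rows_top (i) (hi : i.val = 0) : rows i = x :=
    Fin.append_of_val_eq_left (t := 0) _ _ hi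
  have rows_bar (i a) (hi : i.val = 1 + a.val) : rows i = b a :=
    Fin.append_of_val_eq_left (t := a.succ) _ _ (by simp; omega)
  have rows_bot (i a) (hi : i.val = s + 2 + a.val) : rows i = ρ a :=
    Fin.append_of_val_eq_right _ _ hi
  have cols_left (j a) (hj : j.val = a.val) : cols j = L a := by
    simp only [cols, Function.comp_apply]
    rw [Fin.append_of_val_eq_left (t := Fin.castAdd r a) _ _ hj, Fin.append_left]
  have cols_mid (j k) (hj : j.val = s + 1 + k.val) : cols j = c k := by
    simp only [cols, Function.comp_apply]
    rw [Fin.append_of_val_eq_left (t := Fin.natAdd (s + 1) k) _ _ hj, Fin.append_right]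
  have cols_right (j a) (hj : j.val = r + s + 1 + a.val) : cols j = R a :=
    Fin.append_of_val_eq_right _ _ (by simp; omega)
  refine ⟨rows, cols, ?_, ?_, ?_⟩
  · refine (Fin.strictMono_append (Fin.strictMono_cons.2 ⟨hxb, hb⟩) hρ fun i j => ?_).comp
      (Fin.cast_strictMono _)
    induction i using Fin.cases with
    | zero => simpa using (hxb 0).trans (hbρ 0 j)
    | succ a => simpa using hbρ a j
  · refine (Fin.strictMono_append (Fin.strictMono_append hL hc hLc) hR fun i j => ?_).comp
      (Fin.cast_strictMono _)
    induction i using Fin.addCases with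
    | left a => simpa using hLR a j
    | right k => simpa using hcR k j
  · intro i j hij
    simp only [P, decide_eq_true_eq] at hij
    rcases hij with ⟨hi, k, hj⟩ | ⟨a, hi, hj⟩ | ⟨a, hi, hj⟩ | ⟨a, hi, hj⟩
    · rw [rows_top i hi, cols_mid j k hj]; exact htop k
    · rw [rows_bar i a hi, cols_left j _ hj]; exact hleft a
    · rw [rows_bar i a hi, cols_right j _ hj]; exact hright a
    · rw [rows_bot i a hi, cols_mid j _ hj]; simpa using hbot (h.symm a)

theorem exists_memT_contains_of_le_card {r s m n : ℕ} {A : Matrix (Fin m) (Fin n) Bool}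
    {x : Fin m} {b : Fin (s + 1) → Fin m} {c : Fin r → Fin n} {cl cr : Fin n}
    (hb : StrictMono b) (hc : StrictMono c) (hxb : ∀ a, x < b a)
    (hcl : ∀ k, cl ≤ c k) (hcr : ∀ k, c k ≤ cr) (hclr : cl ≤ cr)
    (htop : ∀ k, A x (c k) = true)
    (hleft : ∀ a, s + 1 ≤ #{j | j < cl ∧ A (b a) j = true})
    (hright : ∀ a, s + 1 ≤ #{j | cr < j ∧ A (b a) j = true})
    (hbot : ∀ k, r ≤ #{i | b (Fin.last s) < i ∧ A i (c k) = true}) :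
    ∃ P, memT r s P ∧ Contains P A := by
  obtain ⟨L, f, hL, hLA⟩ := exists_strictMono_perm_mem_of_le_card _ hleft
  obtain ⟨R, g, hR, hRA⟩ := exists_strictMono_perm_mem_of_le_card _ hright
  obtain ⟨ρ, h, hρ, hρA⟩ := exists_strictMono_perm_mem_of_le_card _ hbot
  simp only [mem_filter, mem_univ, true_and] at hLA hRA hρA
  have hL_lt (a) : L a < cl := by simpa using (hLA (f.symm a)).1
  have hR_gt (a) : cr < R a := by simpa using (hRA (g.symm a)).1
  have hρ_gt (a) : b (Fin.last s) < ρ a := by simpa using (hρA (h.symm a)).1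
  exact exists_memT_contains_of_blocks hb hρ hL hc hR hxb
    (fun a a' => (hb.monotone (Fin.le_last a)).trans_lt (hρ_gt a'))
    (fun a k => (hL_lt a).trans_le (hcl k)) (fun k a => (hcr k).trans_lt (hR_gt a))
    (fun a a' => (hL_lt a).trans_le hclr |>.trans (hR_gt a'))
    htop (fun a => (hLA a).2) (fun a => (hRA a).2) (fun k => (hρA k).2)

section Pruned

variable {r s n : ℕ} {M : Matrix (Fin n) (Fin n) Bool} {i j : Fin n}

theorem pruned_eq_true :
    pruned r s M i j = true ↔ M i j = true ∧
      s + 1 < #{j' | j' ≤ j ∧ M i j' = true} ∧ s + 1 < #{j' | j ≤ j' ∧ M i j' = true} ∧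
      r < #{i' | i ≤ i' ∧ M i' j = true} := by
  simp [pruned, and_assoc]

theorem le_card_left_of_pruned (h : pruned r s M i j = true) {c : Fin n} (hjc : j ≤ c) :
    s + 1 ≤ #{j' | j' < c ∧ M i j' = true} := by
  have hsub : ({j' | j' ≤ j ∧ M i j' = true} : Finset (Fin n)) ⊆
      insert j ({j' | j' < c ∧ M i j' = true} : Finset (Fin n)) := by
    intro y
    simp only [mem_filter, mem_univ, true_and, mem_insert]
    rintro ⟨hy, hMy⟩
    exact hy.eq_or_lt.imp id fun hy => ⟨hy.trans_le hjc, hMy⟩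
  have := (card_le_card hsub).trans (card_insert_le _ _)
  have := (pruned_eq_true.1 h).2.1
  omega

theorem le_card_right_of_pruned (h : pruned r s M i j = true) {c : Fin n} (hcj : c ≤ j) :
    s + 1 ≤ #{j' | c < j' ∧ M i j' = true} := by
  have hsub : ({j' | j ≤ j' ∧ M i j' = true} : Finset (Fin n)) ⊆
      insert j ({j' | c < j' ∧ M i j' = true} : Finset (Fin n)) := by
    intro y
    simp only [mem_filter, mem_univ, true_and, mem_insert]
    rintro ⟨hy, hMy⟩
    exact hy.eq_or_lt.imp Eq.symm fun hy => ⟨hcj.trans_lt hy, hMy⟩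
  have := (card_le_card hsub).trans (card_insert_le _ _)
  have := (pruned_eq_true.1 h).2.2.1
  omega

theorem le_card_below_of_pruned (h : pruned r s M i j = true) {k : Fin n} (hki : k ≤ i) :
    r ≤ #{i' | k < i' ∧ M i' j = true} := by
  have hsub : ({i' | i ≤ i' ∧ M i' j = true} : Finset (Fin n)) ⊆
      insert i ({i' | k < i' ∧ M i' j = true} : Finset (Fin n)) := by
    intro y
    simp only [mem_filter, mem_univ, true_and, mem_insert]
    rintro ⟨hy, hMy⟩
    exact hy.eq_or_lt.imp Eq.symm fun hy => ⟨hki.trans_lt hy, hMy⟩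
  have := (card_le_card hsub).trans (card_insert_le _ _)
  have := (pruned_eq_true.1 h).2.2.2
  omega

end Pruned

namespace Realizes

variable {s n : ℕ} {M' : Matrix (Fin n) (Fin n) Bool} {c : Fin n} {E : Finset (Fin n)}

theorem min'_max'_spec (h : Realizes s M' c E) (hE : E.Nonempty) :
    M' (E.min' hE) c = true ∧
      s + 1 ≤ #{i | E.min' hE < i ∧ M' i c = true} ∧
      ∀ a, a ∈ E ↔ a = E.min' hE ∨ (E.min' hE < a ∧ a ≤ E.max' hE ∧ Spans M' a c) := by
  obtain ⟨-, i, hi, hMi, hcount, i', hi', hbounds, hmem⟩ := h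
  obtain rfl : i = E.min' hE := le_antisymm (hbounds _ (E.min'_mem hE)).1 (E.min'_le i hi)
  obtain rfl : i' = E.max' hE := le_antisymm (E.le_max' i' hi') (hbounds _ (E.max'_mem hE)).2
  exact ⟨hMi, hcount, hmem⟩

theorem spans (h : Realizes s M' c E) {a : Fin n} (ha : a ∈ E) (hmin : E.min' ⟨a, ha⟩ < a) :
    Spans M' a c := by
  rcases ((h.min'_max'_spec ⟨a, ha⟩).2.2 a).1 ha with heq | ⟨-, -, hspan⟩
  · exact absurd heq hmin.ne'
  · exact hspan

theorem exists_max'_le (h : Realizes s M' c E) (hE : E.Nonempty) :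
    ∃ β, E.max' hE ≤ β ∧ M' β c = true := by
  obtain ⟨-, hcount, hmem⟩ := h.min'_max'_spec hE
  by_contra! hno
  have hsub : ({i | E.min' hE < i ∧ M' i c = true} : Finset (Fin n)) ⊆
      (E.erase (E.min' hE)).erase (E.max' hE) := by
    intro i
    simp only [mem_filter, mem_univ, true_and]
    rintro ⟨hi, hMi⟩
    have hlt : i < E.max' hE := lt_of_not_ge fun hle => hno i hle hMi
    exact mem_erase.2 ⟨hlt.ne, mem_erase.2 ⟨hi.ne',
      (hmem i).2 (Or.inr ⟨hi, hlt.le, ⟨c, le_rfl, hMi⟩, ⟨c, le_rfl, hMi⟩⟩)⟩⟩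
  have hcard : #((E.erase (E.min' hE)).erase (E.max' hE)) = s := by
    have hlt := E.min'_lt_max'_of_card (by rw [h.1]; omega)
    rw [card_erase_of_mem (mem_erase.2 ⟨hlt.ne', E.max'_mem hE⟩),
      card_erase_of_mem (E.min'_mem hE), h.1]
    rfl
  have := card_le_card hsub
  omega

end Realizes

/-- If `M` (an `n × n` 0-1 matrix) avoids every matrix in `T_{r,s}`, then in the bar
`s`-visibility representation built from `M'` every edge has multiplicity less than `r`:
no `(s+2)`-set of bars that is realized as an edge is realized by `r` distinct columns. -/
theorem stmt_14 (r s n : ℕ) (M : Matrix (Fin n) (Fin n) Bool)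
    (hA : ∀ P : Matrix (Fin (r + s + 2)) (Fin (r + 2 * s + 2)) Bool,
      memT r s P → ¬ Contains P M) :
    ∀ E : Finset (Fin n), (∃ c, Realizes s (pruned r s M) c E) →
      {c : Fin n | Realizes s (pruned r s M) c E}.ncard < r := by
  classical
  rintro E ⟨c₁, hc₁⟩
  by_contra! hr
  set S : Finset (Fin n) := {c | Realizes s (pruned r s M) c E}
  have hS : r ≤ #S := by rwa [← Set.ncard_coe_finset, coe_filter_univ]
  have hSne : S.Nonempty := ⟨c₁, by simpa [S] using hc₁⟩
  have hSreal {c} (hc : c ∈ S) : Realizes s (pruned r s M) c E := by simpa [S] using hc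
  have hEne : E.Nonempty := card_pos.1 (by rw [hc₁.1]; omega)
  let e := E.orderEmbOfFin hc₁.1
  let c (k : Fin r) := S.orderEmbOfFin rfl (Fin.castLE hS k)
  have hcS (k) : c k ∈ S := S.orderEmbOfFin_mem rfl _
  have hbar (a : Fin (s + 1)) : E.min' hEne < e a.succ :=
    orderEmbOfFin_zero hc₁.1 (by omega) ▸ e.strictMono a.succ_pos
  have hspan (a : Fin (s + 1)) {c} (hc : c ∈ S) : Spans (pruned r s M) (e a.succ) c :=
    (hSreal hc).spans (E.orderEmbOfFin_mem hc₁.1 _) (hbar a)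
  have hlast : e (Fin.last s).succ = E.max' hEne := orderEmbOfFin_last hc₁.1 (by omega)
  obtain ⟨P, hP, hPM⟩ := exists_memT_contains_of_le_card (A := M)
    (e.strictMono.comp Fin.strictMono_succ)
    ((S.orderEmbOfFin rfl).strictMono.comp (Fin.strictMono_castLE hS)) hbar
    (fun k => S.min'_le _ (hcS k)) (fun k => S.le_max' _ (hcS k)) (S.min'_le_max' hSne)
    (fun k => (pruned_eq_true.1 ((hSreal (hcS k)).min'_max'_spec hEne).1).1)
    (fun a => let ⟨⟨_, hj, hM'⟩, _⟩ := hspan a (S.min'_mem hSne)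
      le_card_left_of_pruned hM' hj)
    (fun a => let ⟨_, ⟨_, hj, hM'⟩⟩ := hspan a (S.max'_mem hSne)
      le_card_right_of_pruned hM' hj)
    (fun k => let ⟨_, hβ, hM'⟩ := (hSreal (hcS k)).exists_max'_le hEne
      le_card_below_of_pruned hM' (hlast.trans_le hβ))
  exact hA P hP hPM
end

section
/- Every matrix in T_{r,s} with r ≥ 3 and s ≥ 1 contains the pattern L_3 (the 4 × 5 matrix with rows (0,1,1,1,0), (1,0,0,0,0), (0,0,0,0,1), (0,0,1,0,0)). -/
/-- The pattern `L₃`. -/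
def L3 : Matrix (Fin 4) (Fin 5) Bool :=
  !![false, true,  true,  true,  false;
     true,  false, false, false, false;
     false, false, false, false, true;
     false, false, true,  false, false]

/-- Every matrix in `T_{r,s}` with `r ≥ 3` and `s ≥ 1` contains the pattern `L₃`. -/
theorem stmt_16 (r s : ℕ) (hr : 3 ≤ r) (hs : 1 ≤ s)
    (M : Matrix (Fin (r + s + 2)) (Fin (r + 2 * s + 2)) Bool) (hM : memT r s M) :
    Contains L3 M := by
  obtain ⟨f, g, h, hspec⟩ := hM
  have h1r : (1 : ℕ) < r := by omega
  have hs1 : (1 : ℕ) < s + 1 := by omega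
  set b : Fin r := h.symm ⟨1, h1r⟩ with hb
  have hbval : (h b).val = 1 := by simp [hb]
  have hc0 : (f ⟨0, by omega⟩).val < s + 1 := (f _).isLt
  have hc4 : (g ⟨1, hs1⟩).val < s + 1 := (g _).isLt
  have hbr : b.val < r := b.isLt
  refine ⟨![⟨0, by omega⟩, ⟨1, by omega⟩, ⟨2, by omega⟩, ⟨s + 2 + b.val, by omega⟩],
    ![⟨(f ⟨0, by omega⟩).val, by omega⟩, ⟨s + 1, by omega⟩, ⟨s + 2, by omega⟩,
      ⟨s + 3, by omega⟩, ⟨r + s + 1 + (g ⟨1, hs1⟩).val, by omega⟩], ?_, ?_, ?_⟩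
  · rw [Fin.strictMono_iff_lt_succ]
    intro i
    fin_cases i <;>
      simp [Fin.lt_def, Fin.castSucc, Fin.castAdd, Fin.castLE, Fin.succ,
        Matrix.cons_val_zero, Matrix.cons_val_one, Matrix.head_cons, Matrix.cons_val_succ] <;>
      omega
  · rw [Fin.strictMono_iff_lt_succ]
    intro i
    fin_cases i <;>
      simp [Fin.lt_def, Fin.castSucc, Fin.castAdd, Fin.castLE, Fin.succ,
        Matrix.cons_val_zero, Matrix.cons_val_one, Matrix.head_cons, Matrix.cons_val_succ] <;>
      omega
  · intro i j hij
    fin_cases i <;> fin_cases j <;>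
      first
        | exact absurd hij (by decide)
        | (rw [hspec]; clear hij)
    · exact Or.inl ⟨rfl, ⟨0, by omega⟩, by simp⟩
    · exact Or.inl ⟨rfl, ⟨1, by omega⟩, by rfl⟩
    · exact Or.inl ⟨rfl, ⟨2, by omega⟩, by simp⟩
    · exact Or.inr (Or.inl ⟨⟨0, by omega⟩, by simp, rfl⟩)
    · exact Or.inr (Or.inr (Or.inl ⟨⟨1, hs1⟩, by simp, rfl⟩))
    · exact Or.inr (Or.inr (Or.inr ⟨b, rfl, by rw [hbval]; rfl⟩))
end
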